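/- arXiv:1403.0602 — 5 statements merged into one kernel-verified Lean document; each statement's English description precedes it below -/
import Mathlib

section
/- Let additionally L be a subgroup of Γ with L ⊆ Γ₊. Suppose that (H1) for all x, y, z ∈ Γ₊ the set R\((RxR)⁻¹z ∩ RyR) is finite; (H2) for all x, y ∈ Γ₊ the set RxRyR is contained in the union of finitely many (R,R)-double cosets; (M1) for all y ∈ Γ, x ∈ Γ₊ and z ∈ Γ the set R\((LyR)⁻¹z ∩ RxR) is finite; and (M2) for all y ∈ Γ and x ∈ Γ₊ the set LyRxR is contained in the union of finitely many (L,R)-double cosets. Then for every function φ: Γ → ℂ that is invariant under left multiplication by L and right multiplication by R and vanishes outside finitely many (L,R)-double cosets, and all R-bi-invariant finitely supported f, g: Γ₊ → ℂ, the convolution φ ⋆ f, defined by (φ ⋆ f)(z) := Σ φ(a)·f(a⁻¹z) over the right cosets aR ⊆ Γ with a⁻¹z ∈ Γ₊, is well defined, is again left-L- and right-R-invariant and vanishes outside finitely many (L,R)-double cosets; moreover (φ ⋆ f) ⋆ g = φ ⋆ (f ⋆ g) and φ ⋆ 1_R = φ, where 1_R is the characteristic function of R. Hence this convolution makes the space of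 such functions φ a unital right module over the convolution algebra H(Γ₊, R). -/
open scoped Pointwise

namespace Stmt2

variable {Γ : Type*} [Group Γ]

/-- The orbit set `R\S` of left multiplication by the subgroup `R` on a subset `S ⊆ Γ`. -/
def leftOrbits (R : Subgroup Γ) (S : Set Γ) : Set (Set Γ) :=
  {C | ∃ g ∈ S, C = (R : Set Γ) * {g}}

/-- `A⁻¹x = {a⁻¹ · x : a ∈ A}`. -/
def invMul (A : Set Γ) (x : Γ) : Set Γ := (fun a => a⁻¹ * x) '' A

/-- `f : Γ → ℂ` is an element of the Hecke algebra `H(Γ₊, R)`. -/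
def IsHeckeFn (Γp : Subsemigroup Γ) (R : Subgroup Γ) (f : Γ → ℂ) : Prop :=
  (∀ g, f g ≠ 0 → g ∈ Γp) ∧
  (∀ r ∈ R, ∀ r' ∈ R, ∀ g, f (r * g * r') = f g) ∧
  (∃ D : Finset Γ, ∀ g, f g ≠ 0 → ∃ d ∈ D, g ∈ DoubleCoset.doubleCoset d (R : Set Γ) (R : Set Γ))

/-- `φ : Γ → ℂ` is left-`L`-invariant, right-`R`-invariant and supported on
finitely many `(L,R)`-double cosets. -/
def IsModFn (L R : Subgroup Γ) (φ : Γ → ℂ) : Prop :=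
  (∀ l ∈ L, ∀ r ∈ R, ∀ g, φ (l * g * r) = φ g) ∧
  (∃ D : Finset Γ, ∀ g, φ g ≠ 0 → ∃ d ∈ D, g ∈ DoubleCoset.doubleCoset d (L : Set Γ) (R : Set Γ))

/-- Convolution: `(φ ⋆ f)(z) = Σ φ(a)·f(a⁻¹z)`, the sum running over the cosets `aR`. -/
noncomputable def conv (R : Subgroup Γ) (φ f : Γ → ℂ) : Γ → ℂ :=
  fun z => ∑ᶠ c : Γ ⧸ R, φ (Quotient.out c) * f ((Quotient.out c)⁻¹ * z)

end Stmt2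


/-!
A summand `φ(a) f(a⁻¹z)` of `(φ ⋆ f)(z)` depends only on the coset `aR`, and `aR ↦ R·a⁻¹z` is
injective, so (M1) bounds the number of nonzero summands. A nonzero summand puts `z` in
`(supp φ)(supp f)`, which (M2) covers by finitely many `(L,R)`-double cosets. Associativity is
Fubini for the double sum over pairs of cosets, finite by (M1) and (M2) again, followed by the
substitution `aR ↦ a'aR`.
-/

open Function DoubleCoset

namespace Stmt2

variable {Γ : Type*} [Group Γ] {M : Type*}

def IsLeftInvariant (L : Subgroup Γ) (F : Γ → M) : Prop :=
  ∀ l ∈ L, ∀ a, F (l * a) = F a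

def IsRightInvariant (R : Subgroup Γ) (F : Γ → M) : Prop :=
  ∀ a, ∀ r ∈ R, F (a * r) = F a

theorem finsum_comm_of_finite [AddCommMonoid M] {α β : Type*} {F : α → β → M}
    (h : (support (uncurry F)).Finite) :
    ∑ᶠ a, ∑ᶠ b, F a b = ∑ᶠ b, ∑ᶠ a, F a b := by
  have h' : (support (uncurry (flip F))).Finite :=
    h.preimage (Equiv.prodComm β α).injective.injOn
  calc ∑ᶠ a, ∑ᶠ b, F a b = ∑ᶠ p, uncurry F p := (finsum_curry _ h).symm
    _ = ∑ᶠ p, uncurry (flip F) p := (finsum_comp_equiv (Equiv.prodComm β α)).symm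
    _ = ∑ᶠ b, ∑ᶠ a, F a b := finsum_curry _ h'

variable {R L : Subgroup Γ}

theorem IsRightInvariant.apply_out_mk {F : Γ → M} (hF : IsRightInvariant R F) (x : Γ) :
    F (x : Γ ⧸ R).out = F x := by
  obtain ⟨r, hr⟩ := QuotientGroup.mk_out_eq_mul R x
  rw [hr, hF x r r.2]

theorem IsRightInvariant.finsum_mul_out [AddCommMonoid M] {F : Γ → M} (hF : IsRightInvariant R F)
    (g : Γ) : ∑ᶠ c : Γ ⧸ R, F (g * c.out) = ∑ᶠ c : Γ ⧸ R, F c.out := by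
  refine finsum_eq_of_bijective (g • ·) (MulAction.bijective g) fun c => ?_
  rw [← hF.apply_out_mk, ← MulAction.Quotient.mk_smul_out, smul_eq_mul]

theorem isRightInvariant_conv_summand {φ f : Γ → ℂ} (hφ : IsRightInvariant R φ)
    (hf : IsLeftInvariant R f) (z : Γ) : IsRightInvariant R fun a => φ a * f (a⁻¹ * z) := by
  intro a r hr
  dsimp only
  rw [hφ a r hr, mul_inv_rev, mul_assoc, hf _ (inv_mem hr)]

theorem IsLeftInvariant.conv {φ f : Γ → ℂ} (hφL : IsLeftInvariant L φ) (hφ : IsRightInvariant R φ)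
    (hf : IsLeftInvariant R f) : IsLeftInvariant L (conv R φ f) := by
  intro l hl z
  rw [Stmt2.conv, ← (isRightInvariant_conv_summand hφ hf (l * z)).finsum_mul_out l]
  simp only [hφL l hl, mul_inv_rev, mul_assoc, inv_mul_cancel_left, Stmt2.conv]

theorem IsRightInvariant.conv {φ f : Γ → ℂ} (hf : IsRightInvariant R f) :
    IsRightInvariant R (conv R φ f) := by
  intro z r hr
  simp only [Stmt2.conv, ← mul_assoc, hf _ r hr]

theorem isModFn_iff {φ : Γ → ℂ} :
    IsModFn L R φ ↔ IsLeftInvariant L φ ∧ IsRightInvariant R φ ∧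
      ∃ D : Finset Γ, support φ ⊆ ⋃ d ∈ D, doubleCoset d (L : Set Γ) R := by
  simp only [IsModFn, IsLeftInvariant, IsRightInvariant, support_subset_iff, Set.mem_iUnion₂,
    exists_prop]
  refine ⟨fun ⟨h, hD⟩ => ⟨fun l hl a => by simpa using h l hl 1 R.one_mem a,
    fun a r hr => by simpa using h 1 L.one_mem r hr a, hD⟩,
    fun ⟨hl, hr, hD⟩ => ⟨fun l hl' r hr' a => by rw [hr _ r hr', hl l hl' a], hD⟩⟩

theorem mem_of_mem_doubleCoset {Γp : Subsemigroup Γ} (hR : (R : Set Γ) ⊆ Γp) {d g : Γ}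
    (hg : g ∈ doubleCoset d (R : Set Γ) R) (hgΓp : g ∈ Γp) : d ∈ Γp := by
  obtain ⟨r, hr, r', hr', rfl⟩ := mem_doubleCoset.1 hg
  have hd : d = r⁻¹ * (r * d * r') * r'⁻¹ := by group
  rw [hd]
  exact Γp.mul_mem (Γp.mul_mem (hR (inv_mem hr)) hgΓp) (hR (inv_mem hr'))

namespace IsHeckeFn

variable {Γp : Subsemigroup Γ} {f : Γ → ℂ}

theorem isLeftInvariant (hf : IsHeckeFn Γp R f) : IsLeftInvariant R f :=
  fun r hr a => by simpa using hf.2.1 r hr 1 R.one_mem a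

theorem isRightInvariant (hf : IsHeckeFn Γp R f) : IsRightInvariant R f :=
  fun a r hr => by simpa using hf.2.1 1 R.one_mem r hr a

theorem exists_finset_support_subset (hR : (R : Set Γ) ⊆ Γp) (hf : IsHeckeFn Γp R f) :
    ∃ D : Finset Γ, (∀ d ∈ D, d ∈ Γp) ∧ support f ⊆ ⋃ d ∈ D, doubleCoset d (R : Set Γ) R := by
  classical
  obtain ⟨hfΓp, -, D, hD⟩ := hf
  refine ⟨D.filter (· ∈ Γp), fun d hd => (Finset.mem_filter.1 hd).2, fun g hg => ?_⟩
  obtain ⟨d, hd, hgd⟩ := hD g hg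
  exact Set.mem_biUnion (Finset.mem_filter.2 ⟨hd, mem_of_mem_doubleCoset hR hgd (hfΓp g hg)⟩) hgd

end IsHeckeFn

theorem injective_mul_singleton_out_inv_mul (z : Γ) :
    Injective fun c : Γ ⧸ R => (R : Set Γ) * {c.out⁻¹ * z} := by
  intro c c' h
  have hmem : c.out⁻¹ * z ∈ (R : Set Γ) * {c'.out⁻¹ * z} := by
    rw [← show (R : Set Γ) * {c.out⁻¹ * z} = R * {c'.out⁻¹ * z} from h]
    exact Set.mem_mul.2 ⟨1, R.one_mem, _, rfl, one_mul _⟩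
  obtain ⟨r, hr, _, rfl, hrz⟩ := Set.mem_mul.1 hmem
  have hcc' : c.out⁻¹ * c'.out = r := by
    rw [← mul_assoc, mul_left_inj] at hrz
    rw [← hrz, inv_mul_cancel_right]
  rw [← QuotientGroup.out_eq' c, ← QuotientGroup.out_eq' c', QuotientGroup.eq, hcc']
  exact hr

theorem finite_setOf_out_mem {A B : Set Γ} {z : Γ} (h : (leftOrbits R (invMul A z ∩ B)).Finite) :
    {c : Γ ⧸ R | c.out ∈ A ∧ c.out⁻¹ * z ∈ B}.Finite := by
  refine Set.Finite.of_finite_image (h.subset ?_) (injective_mul_singleton_out_inv_mul z).injOn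
  rintro _ ⟨c, ⟨hA, hB⟩, rfl⟩
  exact ⟨c.out⁻¹ * z, ⟨⟨c.out, hA, rfl⟩, hB⟩, rfl⟩

theorem finite_leftOrbits_biUnion {Y X : Finset Γ} {A B : Γ → Set Γ} {z : Γ}
    (h : ∀ y ∈ Y, ∀ x ∈ X, (leftOrbits R (invMul (A y) z ∩ B x)).Finite) :
    (leftOrbits R (invMul (⋃ y ∈ Y, A y) z ∩ ⋃ x ∈ X, B x)).Finite := by
  refine (Set.Finite.biUnion Y.finite_toSet fun y hy =>
    Set.Finite.biUnion X.finite_toSet fun x hx => h y hy x hx).subset ?_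
  rintro _ ⟨g, ⟨⟨a, ha, rfl⟩, hg⟩, rfl⟩
  obtain ⟨y, hy, ha⟩ := Set.mem_iUnion₂.1 ha
  obtain ⟨x, hx, hg⟩ := Set.mem_iUnion₂.1 hg
  exact Set.mem_biUnion hy (Set.mem_biUnion hx ⟨_, ⟨⟨a, ha, rfl⟩, hg⟩, rfl⟩)

theorem exists_biUnion_mul_biUnion_subset {Y X : Finset Γ}
    (h : ∀ y ∈ Y, ∀ x ∈ X, ∃ D : Finset Γ, doubleCoset y (L : Set Γ) R * doubleCoset x (R : Set Γ) R ⊆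
      ⋃ d ∈ D, doubleCoset d (L : Set Γ) R) :
    ∃ D : Finset Γ,
      (⋃ y ∈ Y, doubleCoset y (L : Set Γ) R) * (⋃ x ∈ X, doubleCoset x (R : Set Γ) R) ⊆
        ⋃ d ∈ D, doubleCoset d (L : Set Γ) R := by
  classical
  choose! D hD using h
  refine ⟨(Y ×ˢ X).biUnion fun p => D p.1 p.2, ?_⟩
  rintro _ ⟨a, ha, b, hb, rfl⟩
  obtain ⟨y, hy, ha⟩ := Set.mem_iUnion₂.1 ha
  obtain ⟨x, hx, hb⟩ := Set.mem_iUnion₂.1 hb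
  obtain ⟨d, hd, hab⟩ := Set.mem_iUnion₂.1 (hD y hy x hx (Set.mul_mem_mul ha hb))
  exact Set.mem_biUnion (Finset.mem_biUnion.2 ⟨(y, x), Finset.mem_product.2 ⟨hy, hx⟩, hd⟩) hab

variable {φ f g : Γ → ℂ}

theorem finite_support_conv_summand {A B : Set Γ} {z : Γ} (hφ : support φ ⊆ A) (hf : support f ⊆ B)
    (h : (leftOrbits R (invMul A z ∩ B)).Finite) :
    (support fun c : Γ ⧸ R => φ c.out * f (c.out⁻¹ * z)).Finite :=
  (finite_setOf_out_mem h).subset fun _ hc =>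
    ⟨hφ (left_ne_zero_of_mul hc), hf (right_ne_zero_of_mul hc)⟩

theorem support_conv_subset : support (conv R φ f) ⊆ support φ * support f := by
  intro z hz
  obtain ⟨c, hc⟩ : ∃ c : Γ ⧸ R, φ c.out * f (c.out⁻¹ * z) ≠ 0 := by
    by_contra! h
    exact hz (finsum_eq_zero_of_forall_eq_zero h)
  simpa using Set.mul_mem_mul (mem_support.2 (left_ne_zero_of_mul hc))
    (mem_support.2 (right_ne_zero_of_mul hc))

theorem conv_conv_apply (hf : IsRightInvariant R f) (hg : IsLeftInvariant R g)
    (hφf : ∀ w, (support fun c : Γ ⧸ R => φ c.out * f (c.out⁻¹ * w)).Finite) {z : Γ}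
    (hfin : {c : Γ ⧸ R | c.out ∈ support φ * support f ∧ c.out⁻¹ * z ∈ support g}.Finite) :
    conv R (conv R φ f) g z = conv R φ (conv R f g) z := by
  set F : Γ ⧸ R → Γ ⧸ R → ℂ := fun c c' => φ c'.out * f (c'.out⁻¹ * c.out) * g (c.out⁻¹ * z)
  have hF : (support (uncurry F)).Finite := by
    refine (hfin.biUnion fun c _ => (Set.finite_singleton c).prod (hφf c.out)).subset ?_
    rintro ⟨c, c'⟩ hcc'
    have hφf0 := left_ne_zero_of_mul hcc'
    refine Set.mem_biUnion ⟨?_, right_ne_zero_of_mul hcc'⟩ ⟨rfl, hφf0⟩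
    simpa using Set.mul_mem_mul (mem_support.2 (left_ne_zero_of_mul hφf0))
      (mem_support.2 (right_ne_zero_of_mul hφf0))
  have hG : ∀ c' : Γ ⧸ R, IsRightInvariant R fun b => f (c'.out⁻¹ * b) * g (b⁻¹ * z) :=
    fun c' b r hr => by
      dsimp only
      rw [← mul_assoc, hf _ r hr, mul_inv_rev, mul_assoc, hg _ (inv_mem hr)]
  calc conv R (conv R φ f) g z = ∑ᶠ c, ∑ᶠ c', F c c' := by simp only [Stmt2.conv, finsum_mul, F]
    _ = ∑ᶠ c', ∑ᶠ c, F c c' := finsum_comm_of_finite hF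
    _ = conv R φ (conv R f g) z := finsum_congr fun c' => by
      have hshift := (hG c').finsum_mul_out c'.out
      simp only [mul_inv_rev, mul_assoc, inv_mul_cancel_left] at hshift
      simp only [Stmt2.conv, hshift, mul_finsum, F, mul_assoc]

theorem conv_indicator_one (hφ : IsRightInvariant R φ) :
    conv R φ ((R : Set Γ).indicator 1) = φ := by
  funext z
  rw [Stmt2.conv, finsum_eq_single _ (z : Γ ⧸ R)]
  · rw [Set.indicator_of_mem (QuotientGroup.eq.1 (QuotientGroup.out_eq' _)), Pi.one_apply, mul_one,
      hφ.apply_out_mk]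
  · intro c hc
    rw [Set.indicator_of_notMem, mul_zero]
    intro hcz
    exact hc (by rw [← QuotientGroup.out_eq' c, QuotientGroup.eq]; exact hcz)

end Stmt2

open Stmt2 in
theorem stmt2_general {Γ : Type*} [Group Γ] (Γp : Subsemigroup Γ) (R L : Subgroup Γ)
    (hR : (R : Set Γ) ⊆ (Γp : Set Γ))
    (M1 : ∀ y : Γ, ∀ x ∈ Γp, ∀ z : Γ,
      (leftOrbits R (invMul (DoubleCoset.doubleCoset y (L : Set Γ) (R : Set Γ)) z ∩
        DoubleCoset.doubleCoset x (R : Set Γ) (R : Set Γ))).Finite)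
    (M2 : ∀ y : Γ, ∀ x ∈ Γp, ∃ D : Finset Γ,
      DoubleCoset.doubleCoset y (L : Set Γ) (R : Set Γ) * DoubleCoset.doubleCoset x (R : Set Γ) (R : Set Γ) ⊆
        ⋃ d ∈ D, DoubleCoset.doubleCoset d (L : Set Γ) (R : Set Γ)) :
    ∀ φ f g : Γ → ℂ, IsModFn L R φ → IsHeckeFn Γp R f → IsHeckeFn Γp R g →
      (∀ z : Γ, (Function.support
          (fun c : Γ ⧸ R => φ (Quotient.out c) * f ((Quotient.out c)⁻¹ * z))).Finite) ∧
      IsModFn L R (conv R φ f) ∧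
      conv R (conv R φ f) g = conv R φ (conv R f g) ∧
      conv R φ (Set.indicator (R : Set Γ) 1) = φ := by
  intro φ f g hφ hf hg
  obtain ⟨hφL, hφR, Dφ, hDφ⟩ := isModFn_iff.1 hφ
  obtain ⟨Df, hDfΓp, hDf⟩ := hf.exists_finset_support_subset hR
  obtain ⟨Dg, hDgΓp, hDg⟩ := hg.exists_finset_support_subset hR
  have hφf : ∀ z, (support fun c : Γ ⧸ R => φ c.out * f (c.out⁻¹ * z)).Finite := fun z =>
    finite_support_conv_summand hDφ hDf
      (finite_leftOrbits_biUnion fun y _ x hx => M1 y x (hDfΓp x hx) z)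
  obtain ⟨D, hD⟩ := exists_biUnion_mul_biUnion_subset fun y _ x hx => M2 y x (hDfΓp x hx)
  have hφf_supp : support φ * support f ⊆ ⋃ d ∈ D, doubleCoset d (L : Set Γ) R :=
    (Set.mul_subset_mul hDφ hDf).trans hD
  refine ⟨hφf, isModFn_iff.2 ⟨hφL.conv hφR hf.isLeftInvariant, hf.isRightInvariant.conv,
    D, support_conv_subset.trans hφf_supp⟩, funext fun z => ?_, conv_indicator_one hφR⟩
  exact conv_conv_apply hf.isRightInvariant hg.isLeftInvariant hφf
    ((finite_setOf_out_mem (finite_leftOrbits_biUnion fun d _ w hw => M1 d w (hDgΓp w hw) z)).subset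
      fun c hc => ⟨hφf_supp hc.1, hDg hc.2⟩)

open Stmt2 in
/-- Under (H1), (H2), (M1) and (M2), right convolution makes the space of
left-`L`-, right-`R`-invariant functions on `Γ` which are supported on finitely
many `(L,R)`-double cosets a unital right module over `H(Γ₊, R)`. -/
theorem stmt2 {Γ : Type*} [Group Γ] (Γp : Subsemigroup Γ) (R L : Subgroup Γ)
    (hR : (R : Set Γ) ⊆ (Γp : Set Γ)) (hL : (L : Set Γ) ⊆ (Γp : Set Γ))
    (H1 : ∀ x ∈ Γp, ∀ y ∈ Γp, ∀ z ∈ Γp,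
      (leftOrbits R (invMul (DoubleCoset.doubleCoset x (R : Set Γ) (R : Set Γ)) z ∩
        DoubleCoset.doubleCoset y (R : Set Γ) (R : Set Γ))).Finite)
    (H2 : ∀ x ∈ Γp, ∀ y ∈ Γp, ∃ D : Finset Γ,
      DoubleCoset.doubleCoset x (R : Set Γ) (R : Set Γ) * DoubleCoset.doubleCoset y (R : Set Γ) (R : Set Γ) ⊆
        ⋃ d ∈ D, DoubleCoset.doubleCoset d (R : Set Γ) (R : Set Γ))
    (M1 : ∀ y : Γ, ∀ x ∈ Γp, ∀ z : Γ,
      (leftOrbits R (invMul (DoubleCoset.doubleCoset y (L : Set Γ) (R : Set Γ)) z ∩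
        DoubleCoset.doubleCoset x (R : Set Γ) (R : Set Γ))).Finite)
    (M2 : ∀ y : Γ, ∀ x ∈ Γp, ∃ D : Finset Γ,
      DoubleCoset.doubleCoset y (L : Set Γ) (R : Set Γ) * DoubleCoset.doubleCoset x (R : Set Γ) (R : Set Γ) ⊆
        ⋃ d ∈ D, DoubleCoset.doubleCoset d (L : Set Γ) (R : Set Γ)) :
    ∀ φ f g : Γ → ℂ, IsModFn L R φ → IsHeckeFn Γp R f → IsHeckeFn Γp R g →
      (∀ z : Γ, (Function.support
          (fun c : Γ ⧸ R => φ (Quotient.out c) * f ((Quotient.out c)⁻¹ * z))).Finite) ∧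
      IsModFn L R (conv R φ f) ∧
      conv R (conv R φ f) g = conv R φ (conv R f g) ∧
      conv R φ (Set.indicator (R : Set Γ) 1) = φ :=
  stmt2_general Γp R L hR M1 M2
end

section
/- Let Γ be a group, Γ₊ ⊆ Γ a sub-semigroup, and R, L subgroups of Γ with R ⊆ Γ₊ and L ⊆ Γ₊. Suppose that (M1) for all y ∈ Γ, x ∈ Γ₊ and z ∈ Γ the set R\((LyR)⁻¹z ∩ RxR) is finite; (M2) for all y ∈ Γ and x ∈ Γ₊ the set LyRxR is contained in the union of finitely many (L,R)-double cosets; and (H2) for all x, y ∈ Γ₊ the set RxRyR is contained in the union of finitely many (R,R)-double cosets. Then (H1) holds: for all x, y ∈ Γ₊ and z ∈ Γ₊ the set R\((RxR)⁻¹z ∩ RyR) is finite. -/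
/-! The double coset `L·1·R` contains `1`, so (M2) with `y = 1` covers `RxR` by finitely many
double cosets `LdR`. Hence `(RxR)⁻¹z ∩ RyR` lies in the finite union of the sets `(LdR)⁻¹z ∩ RyR`,
each of which has finitely many `R`-orbits by (M1). -/

open scoped Pointwise

namespace Stmt3

variable {Γ : Type*} [Group Γ]

/-- The orbit set `R\S` of left multiplication by the subgroup `R` on a subset `S ⊆ Γ`. -/
def leftOrbits (R : Subgroup Γ) (S : Set Γ) : Set (Set Γ) :=
  {C | ∃ g ∈ S, C = (R : Set Γ) * {g}}

/-- `A⁻¹x = {a⁻¹ · x : a ∈ A}`. -/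
def invMul (A : Set Γ) (x : Γ) : Set Γ := (fun a => a⁻¹ * x) '' A

theorem leftOrbits_mono (R : Subgroup Γ) {S T : Set Γ} (h : S ⊆ T) :
    leftOrbits R S ⊆ leftOrbits R T := by
  rintro C ⟨g, hg, rfl⟩
  exact ⟨g, h hg, rfl⟩

theorem leftOrbits_biUnion {ι : Type*} (R : Subgroup Γ) (I : Set ι) (S : ι → Set Γ) :
    leftOrbits R (⋃ i ∈ I, S i) = ⋃ i ∈ I, leftOrbits R (S i) := by
  ext C
  simp only [leftOrbits, Set.mem_iUnion, Set.mem_ofPred_eq, exists_prop]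
  tauto

theorem invMul_mono {A B : Set Γ} (h : A ⊆ B) (x : Γ) : invMul A x ⊆ invMul B x :=
  Set.image_mono h

theorem invMul_biUnion {ι : Type*} (I : Set ι) (A : ι → Set Γ) (x : Γ) :
    invMul (⋃ i ∈ I, A i) x = ⋃ i ∈ I, invMul (A i) x :=
  Set.image_iUnion₂ _ _

theorem subset_doubleCoset_one_mul (H K : Subgroup Γ) (B : Set Γ) :
    B ⊆ DoubleCoset.doubleCoset 1 (H : Set Γ) K * B :=
  Set.subset_mul_right B (DoubleCoset.mem_doubleCoset_self H K 1)

end Stmt3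

open Stmt3 in
theorem stmt3_general {Γ : Type*} [Group Γ] (Γp : Subsemigroup Γ) (R L : Subgroup Γ)
    (M1 : ∀ y : Γ, ∀ x ∈ Γp, ∀ z : Γ,
      (leftOrbits R (invMul (DoubleCoset.doubleCoset y (L : Set Γ) (R : Set Γ)) z ∩
        DoubleCoset.doubleCoset x (R : Set Γ) (R : Set Γ))).Finite)
    (M2 : ∀ y : Γ, ∀ x ∈ Γp, ∃ D : Finset Γ,
      DoubleCoset.doubleCoset y (L : Set Γ) (R : Set Γ) * DoubleCoset.doubleCoset x (R : Set Γ) (R : Set Γ) ⊆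
        ⋃ d ∈ D, DoubleCoset.doubleCoset d (L : Set Γ) (R : Set Γ)) :
    ∀ x ∈ Γp, ∀ y ∈ Γp, ∀ z ∈ Γp,
      (leftOrbits R (invMul (DoubleCoset.doubleCoset x (R : Set Γ) (R : Set Γ)) z ∩
        DoubleCoset.doubleCoset y (R : Set Γ) (R : Set Γ))).Finite := by
  intro x hx y hy z _
  obtain ⟨D, hD⟩ := M2 1 x hx
  have hcover : DoubleCoset.doubleCoset x (R : Set Γ) R ⊆
      ⋃ d ∈ D, DoubleCoset.doubleCoset d (L : Set Γ) R :=
    (subset_doubleCoset_one_mul L R _).trans hD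
  have hsub : invMul (DoubleCoset.doubleCoset x (R : Set Γ) R) z ∩
      DoubleCoset.doubleCoset y (R : Set Γ) R ⊆
      ⋃ d ∈ (D : Set Γ), (invMul (DoubleCoset.doubleCoset d (L : Set Γ) R) z ∩
        DoubleCoset.doubleCoset y (R : Set Γ) R) := by
    rw [← Set.iUnion₂_inter, ← invMul_biUnion]
    exact Set.inter_subset_inter_left _ (invMul_mono hcover z)
  have horbits := leftOrbits_mono R hsub
  rw [leftOrbits_biUnion] at horbits
  exact (D.finite_toSet.biUnion fun d _ => M1 d y hy z).subset horbits

open Stmt3 in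
/-- Simplified criterion: the fiber-finiteness condition (H1) of a finite Hecke datum
follows from (M1), (M2) and (H2). -/
theorem stmt3 {Γ : Type*} [Group Γ] (Γp : Subsemigroup Γ) (R L : Subgroup Γ)
    (hR : (R : Set Γ) ⊆ (Γp : Set Γ)) (hL : (L : Set Γ) ⊆ (Γp : Set Γ))
    (M1 : ∀ y : Γ, ∀ x ∈ Γp, ∀ z : Γ,
      (leftOrbits R (invMul (DoubleCoset.doubleCoset y (L : Set Γ) (R : Set Γ)) z ∩
        DoubleCoset.doubleCoset x (R : Set Γ) (R : Set Γ))).Finite)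
    (M2 : ∀ y : Γ, ∀ x ∈ Γp, ∃ D : Finset Γ,
      DoubleCoset.doubleCoset y (L : Set Γ) (R : Set Γ) * DoubleCoset.doubleCoset x (R : Set Γ) (R : Set Γ) ⊆
        ⋃ d ∈ D, DoubleCoset.doubleCoset d (L : Set Γ) (R : Set Γ))
    (H2 : ∀ x ∈ Γp, ∀ y ∈ Γp, ∃ D : Finset Γ,
      DoubleCoset.doubleCoset x (R : Set Γ) (R : Set Γ) * DoubleCoset.doubleCoset y (R : Set Γ) (R : Set Γ) ⊆
        ⋃ d ∈ D, DoubleCoset.doubleCoset d (R : Set Γ) (R : Set Γ)) :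
    ∀ x ∈ Γp, ∀ y ∈ Γp, ∀ z ∈ Γp,
      (leftOrbits R (invMul (DoubleCoset.doubleCoset x (R : Set Γ) (R : Set Γ)) z ∩
        DoubleCoset.doubleCoset y (R : Set Γ) (R : Set Γ))).Finite :=
  stmt3_general Γp R L M1 M2
end

section
/- Let Λ be an abelian group with a translation-invariant partial order all of whose intervals [λ, μ] are finite, let Λ₊ ⊆ Λ be a subset, and let λ ↦ X^λ be a bijection from Λ₊ onto the set of (R,R)-double cosets contained in Γ₊. Assume (SH1): for all λ, μ ∈ Λ₊ and z ∈ Γ₊ the set R\((X^λ)⁻¹z ∩ X^μ) is finite; and (SH2): for all λ, μ ∈ Λ₊, the product set X^λ·X^μ is contained in the union of the X^ν over ν ∈ Λ₊ with ν ≤ λ + μ. Then for any two R-bi-invariant functions f₁, f₂: Γ₊ → ℂ with semi-infinite support and each z ∈ Γ₊, only finitely many right cosets aR with a ∈ Γ₊ and a⁻¹z ∈ Γ₊ give a nonzero summand f₁(a)·f₂(a⁻¹z); moreover the resulting convolution f₁ ⋆ f₂ is R-bi-invariant, and if the supports of f₁ and f₂ are contained in ∪ᵢ {μ ≤ λᵢ}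 and ∪ⱼ {μ ≤ λ′ⱼ} respectively, then the support of f₁ ⋆ f₂ is contained in ∪_{i,j} {ν ∈ Λ₊ : ν ≤ λᵢ + λ′ⱼ}. -/
/-!
Fix `z ∈ Γ₊` and let `X^ν₀` be its double coset. If the coset `aR` contributes to
`(f₁ ⋆ f₂)(z)`, then `a ∈ X^λ` and `a⁻¹z ∈ X^μ` with `λ ≤ m₁`, `μ ≤ m₂` for bounds `m₁, m₂` of
the supports, and (SH2) together with the disjointness of double cosets gives `ν₀ ≤ λ + μ`.
Hence `λ ∈ [ν₀ - m₂, m₁]` and `μ ∈ [ν₀ - m₁, m₂]` range over finite sets, and for each such pair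
(SH1) leaves only finitely many cosets. Bi-invariance of `f₁ ⋆ f₂` comes from reindexing the
cosets `aR ↦ raR`; the support bound is (SH2) applied to one nonzero summand.
-/

open scoped Pointwise

namespace Stmt4

variable {Γ : Type*} [Group Γ]

/-- The orbit set `R\S` of left multiplication by the subgroup `R` on a subset `S ⊆ Γ`. -/
def leftOrbits (R : Subgroup Γ) (S : Set Γ) : Set (Set Γ) :=
  {C | ∃ g ∈ S, C = (R : Set Γ) * {g}}

/-- `A⁻¹x = {a⁻¹ · x : a ∈ A}`. -/
def invMul (A : Set Γ) (x : Γ) : Set Γ := (fun a => a⁻¹ * x) '' A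

/-- Convolution: `(f ⋆ g)(z) = Σ f(a)·g(a⁻¹z)`, the sum running over the cosets `aR`. -/
noncomputable def conv (R : Subgroup Γ) (f g : Γ → ℂ) : Γ → ℂ :=
  fun z => ∑ᶠ c : Γ ⧸ R, f (Quotient.out c) * g ((Quotient.out c)⁻¹ * z)

end Stmt4

namespace Stmt4

section Group

variable {Γ : Type*} [Group Γ] (R : Subgroup Γ)

def IsBiInvariant {M : Type*} (f : Γ → M) : Prop :=
  ∀ r ∈ R, ∀ r' ∈ R, ∀ g, f (r * g * r') = f g

variable {R}

theorem IsBiInvariant.apply_mul {M : Type*} {f : Γ → M} (hf : IsBiInvariant R f) {r : Γ}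
    (hr : r ∈ R) (g : Γ) : f (g * r) = f g := by
  simpa using hf 1 R.one_mem r hr g

theorem IsBiInvariant.apply_mul_left {M : Type*} {f : Γ → M} (hf : IsBiInvariant R f) {r : Γ}
    (hr : r ∈ R) (g : Γ) : f (r * g) = f g := by
  simpa using hf r hr 1 R.one_mem g

theorem summand_out_eq {M : Type*} [Mul M] {f₁ f₂ : Γ → M} (hf₁ : IsBiInvariant R f₁)
    (hf₂ : IsBiInvariant R f₂) (b z : Γ) :
    f₁ (Quotient.out (b : Γ ⧸ R)) * f₂ ((Quotient.out (b : Γ ⧸ R))⁻¹ * z) =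
      f₁ b * f₂ (b⁻¹ * z) := by
  obtain ⟨r, hr⟩ := QuotientGroup.mk_out_eq_mul R b
  rw [hr, hf₁.apply_mul r.2, mul_inv_rev, mul_assoc, hf₂.apply_mul_left (inv_mem r.2)]

theorem conv_mul_right {f₁ f₂ : Γ → ℂ} (hf₂ : IsBiInvariant R f₂) {r : Γ} (hr : r ∈ R)
    (g : Γ) : conv R f₁ f₂ (g * r) = conv R f₁ f₂ g :=
  finsum_congr fun c => by rw [← mul_assoc, hf₂.apply_mul hr]

theorem conv_mul_left {f₁ f₂ : Γ → ℂ} (hf₁ : IsBiInvariant R f₁) (hf₂ : IsBiInvariant R f₂)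
    {r : Γ} (hr : r ∈ R) (g : Γ) : conv R f₁ f₂ (r * g) = conv R f₁ f₂ g := by
  refine (finsum_comp_equiv (MulAction.toPerm r)).symm.trans (finsum_congr fun c => ?_)
  have hmk : ((r * Quotient.out c : Γ) : Γ ⧸ R) = r • c :=
    MulAction.Quotient.coe_smul_out R r c
  rw [MulAction.toPerm_apply, ← hmk, summand_out_eq hf₁ hf₂, hf₁.apply_mul_left hr, mul_inv_rev,
    mul_assoc, inv_mul_cancel_left]

theorem conv_isBiInvariant {f₁ f₂ : Γ → ℂ} (hf₁ : IsBiInvariant R f₁)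
    (hf₂ : IsBiInvariant R f₂) : IsBiInvariant R (conv R f₁ f₂) := fun r hr r' hr' g => by
  rw [conv_mul_right hf₂ hr', conv_mul_left hf₁ hf₂ hr]

theorem finite_setOf_out_mem_of_finite_leftOrbits {A B : Set Γ} {z : Γ}
    (h : (leftOrbits R (invMul A z ∩ B)).Finite) :
    {c : Γ ⧸ R | Quotient.out c ∈ A ∧ (Quotient.out c)⁻¹ * z ∈ B}.Finite := by
  refine Set.Finite.of_finite_image (f := fun c => (R : Set Γ) * {(Quotient.out c)⁻¹ * z})
    (h.subset ?_) fun c _ c' _ (hcoset : (R : Set Γ) * {_} = (R : Set Γ) * {_}) => ?_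
  · rintro _ ⟨c, ⟨hcA, hcB⟩, rfl⟩
    exact ⟨_, ⟨⟨_, hcA, rfl⟩, hcB⟩, rfl⟩
  · have hmem : (Quotient.out c)⁻¹ * z ∈ (· * ((Quotient.out c')⁻¹ * z)) '' (R : Set Γ) := by
      rw [← Set.mul_singleton, ← hcoset, Set.mul_singleton]
      exact ⟨1, R.one_mem, one_mul _⟩
    obtain ⟨s, hs, hsc : s * _ = _⟩ := hmem
    rw [← mul_assoc, mul_left_inj, mul_inv_eq_iff_eq_mul] at hsc
    rw [← QuotientGroup.out_eq' c, ← QuotientGroup.out_eq' c', QuotientGroup.eq, ← hsc]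
    exact hs

end Group

section Order

variable {Λ : Type*} [AddCommGroup Λ] [PartialOrder Λ]

def window (ν : Λ) (F₁ F₂ : Finset Λ) : Set Λ :=
  ⋃ m₁ ∈ F₁, ⋃ m₂ ∈ F₂, Set.Icc (ν - m₂) m₁

theorem finite_window [LocallyFiniteOrder Λ] (ν : Λ) (F₁ F₂ : Finset Λ) :
    (window ν F₁ F₂).Finite :=
  F₁.finite_toSet.biUnion fun _ _ => F₂.finite_toSet.biUnion fun _ _ => Set.finite_Icc _ _

theorem mem_window [IsOrderedAddMonoid Λ] {ν lam mu m₁ m₂ : Λ} {F₁ F₂ : Finset Λ}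
    (h : ν ≤ lam + mu) (hm₁ : m₁ ∈ F₁) (hlam : lam ≤ m₁) (hm₂ : m₂ ∈ F₂) (hmu : mu ≤ m₂) :
    lam ∈ window ν F₁ F₂ :=
  Set.mem_biUnion hm₁ <| Set.mem_biUnion hm₂
    ⟨sub_le_iff_le_add.2 (h.trans (add_le_add le_rfl hmu)), hlam⟩

end Order

section DoubleCosets

variable {Γ Λ : Type*} [Group Γ] {R : Subgroup Γ} {Λp : Set Λ} {X : Λ → Set Γ}

def SupportBoundedBy [LE Λ] {M : Type*} [Zero M] (Λp : Set Λ) (X : Λ → Set Γ) (F : Finset Λ)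
    (f : Γ → M) : Prop :=
  ∀ g, f g ≠ 0 → ∃ lam ∈ Λp, g ∈ X lam ∧ ∃ mu ∈ F, lam ≤ mu

theorem param_eq_of_mem_of_mem
    (hX : ∀ lam ∈ Λp, ∃ a, X lam = DoubleCoset.doubleCoset a (R : Set Γ) (R : Set Γ))
    (hXinj : ∀ lam ∈ Λp, ∀ mu ∈ Λp, X lam = X mu → lam = mu) {ν ν' : Λ} {z : Γ}
    (hν : ν ∈ Λp) (hν' : ν' ∈ Λp) (hz : z ∈ X ν) (hz' : z ∈ X ν') : ν = ν' := by
  obtain ⟨a, ha⟩ := hX ν hν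
  obtain ⟨a', ha'⟩ := hX ν' hν'
  rw [ha] at hz
  rw [ha'] at hz'
  rw [hXinj ν hν ν' hν' (by rw [ha, ha', ← DoubleCoset.doubleCoset_eq_of_mem hz,
    ← DoubleCoset.doubleCoset_eq_of_mem hz'])]

theorem le_add_of_mem_mul [Add Λ] [LE Λ]
    (hX : ∀ lam ∈ Λp, ∃ a, X lam = DoubleCoset.doubleCoset a (R : Set Γ) (R : Set Γ))
    (hXinj : ∀ lam ∈ Λp, ∀ mu ∈ Λp, X lam = X mu → lam = mu)
    (SH2 : ∀ lam ∈ Λp, ∀ mu ∈ Λp,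
      X lam * X mu ⊆ ⋃ nu ∈ {nu | nu ∈ Λp ∧ nu ≤ lam + mu}, X nu)
    {ν lam mu : Λ} {z : Γ} (hν : ν ∈ Λp) (hz : z ∈ X ν) (hlam : lam ∈ Λp) (hmu : mu ∈ Λp)
    (hz' : z ∈ X lam * X mu) : ν ≤ lam + mu := by
  obtain ⟨ν', ⟨hν', hle⟩, hzν'⟩ := Set.mem_iUnion₂.1 (SH2 lam hlam mu hmu hz')
  rwa [param_eq_of_mem_of_mem hX hXinj hν hν' hz hzν']

variable [AddCommGroup Λ] [PartialOrder Λ] [IsOrderedAddMonoid Λ]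

theorem finite_support_summand [LocallyFiniteOrder Λ]
    (hX : ∀ lam ∈ Λp, ∃ a, X lam = DoubleCoset.doubleCoset a (R : Set Γ) (R : Set Γ))
    (hXinj : ∀ lam ∈ Λp, ∀ mu ∈ Λp, X lam = X mu → lam = mu)
    (SH2 : ∀ lam ∈ Λp, ∀ mu ∈ Λp,
      X lam * X mu ⊆ ⋃ nu ∈ {nu | nu ∈ Λp ∧ nu ≤ lam + mu}, X nu)
    {f₁ f₂ : Γ → ℂ} {F₁ F₂ : Finset Λ} (hf₁ : SupportBoundedBy Λp X F₁ f₁)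
    (hf₂ : SupportBoundedBy Λp X F₂ f₂) {z : Γ} {ν : Λ} (hν : ν ∈ Λp) (hz : z ∈ X ν)
    (SH1 : ∀ lam ∈ Λp, ∀ mu ∈ Λp, (leftOrbits R (invMul (X lam) z ∩ X mu)).Finite) :
    (Function.support
      (fun c : Γ ⧸ R => f₁ (Quotient.out c) * f₂ ((Quotient.out c)⁻¹ * z))).Finite := by
  refine (((finite_window ν F₁ F₂).inter_of_left Λp).biUnion fun lam hlam =>
    ((finite_window ν F₂ F₁).inter_of_left Λp).biUnion fun mu hmu =>
      finite_setOf_out_mem_of_finite_leftOrbits (SH1 lam hlam.2 mu hmu.2)).subset fun c hc => ?_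
  obtain ⟨h₁, h₂⟩ := mul_ne_zero_iff.1 hc
  obtain ⟨lam, hlam, ha, m₁, hm₁, hle₁⟩ := hf₁ _ h₁
  obtain ⟨mu, hmu, hb, m₂, hm₂, hle₂⟩ := hf₂ _ h₂
  have hle : ν ≤ lam + mu :=
    le_add_of_mem_mul hX hXinj SH2 hν hz hlam hmu (by simpa using Set.mul_mem_mul ha hb)
  exact Set.mem_biUnion ⟨mem_window hle hm₁ hle₁ hm₂ hle₂, hlam⟩ <|
    Set.mem_biUnion ⟨mem_window (add_comm lam mu ▸ hle) hm₂ hle₂ hm₁ hle₁, hmu⟩ ⟨ha, hb⟩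

theorem exists_le_add_of_conv_ne_zero
    (SH2 : ∀ lam ∈ Λp, ∀ mu ∈ Λp,
      X lam * X mu ⊆ ⋃ nu ∈ {nu | nu ∈ Λp ∧ nu ≤ lam + mu}, X nu)
    {f₁ f₂ : Γ → ℂ} {F₁ F₂ : Finset Λ} (hf₁ : SupportBoundedBy Λp X F₁ f₁)
    (hf₂ : SupportBoundedBy Λp X F₂ f₂) {z : Γ} (hz : conv R f₁ f₂ z ≠ 0) :
    ∃ ν ∈ Λp, z ∈ X ν ∧ ∃ m₁ ∈ F₁, ∃ m₂ ∈ F₂, ν ≤ m₁ + m₂ := by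
  obtain ⟨c, hc⟩ : ∃ c : Γ ⧸ R, f₁ (Quotient.out c) * f₂ ((Quotient.out c)⁻¹ * z) ≠ 0 := by
    by_contra! h
    exact hz (finsum_eq_zero_of_forall_eq_zero h)
  obtain ⟨h₁, h₂⟩ := mul_ne_zero_iff.1 hc
  obtain ⟨lam, hlam, ha, m₁, hm₁, hle₁⟩ := hf₁ _ h₁
  obtain ⟨mu, hmu, hb, m₂, hm₂, hle₂⟩ := hf₂ _ h₂
  obtain ⟨ν, ⟨hν, hle⟩, hzν⟩ :=
    Set.mem_iUnion₂.1 (SH2 lam hlam mu hmu (by simpa using Set.mul_mem_mul ha hb))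
  exact ⟨ν, hν, hzν, m₁, hm₁, m₂, hm₂, hle.trans (add_le_add hle₁ hle₂)⟩

end DoubleCosets

end Stmt4

open Stmt4 in
theorem stmt4_general {Γ : Type*} [Group Γ] {Λ : Type*} [AddCommGroup Λ] [PartialOrder Λ]
    (hcov : ∀ a b c : Λ, a ≤ b → a + c ≤ b + c)
    (hint : ∀ a b : Λ, (Set.Icc a b).Finite)
    (Γp : Subsemigroup Γ) (R : Subgroup Γ)
    (Λp : Set Λ) (X : Λ → Set Γ)
    (hXdc : ∀ lam ∈ Λp, ∃ a ∈ Γp, X lam = DoubleCoset.doubleCoset a (R : Set Γ) (R : Set Γ))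
    (hXinj : ∀ lam ∈ Λp, ∀ mu ∈ Λp, X lam = X mu → lam = mu)
    (hXsurj : ∀ a ∈ Γp, ∃ lam ∈ Λp, X lam = DoubleCoset.doubleCoset a (R : Set Γ) (R : Set Γ))
    (SH1 : ∀ lam ∈ Λp, ∀ mu ∈ Λp, ∀ z ∈ Γp,
      (leftOrbits R (invMul (X lam) z ∩ X mu)).Finite)
    (SH2 : ∀ lam ∈ Λp, ∀ mu ∈ Λp,
      X lam * X mu ⊆ ⋃ nu ∈ {nu | nu ∈ Λp ∧ nu ≤ lam + mu}, X nu) :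
    ∀ f₁ f₂ : Γ → ℂ,
      (∀ g, f₁ g ≠ 0 → g ∈ Γp) → (∀ g, f₂ g ≠ 0 → g ∈ Γp) →
      (∀ r ∈ R, ∀ r' ∈ R, ∀ g, f₁ (r * g * r') = f₁ g) →
      (∀ r ∈ R, ∀ r' ∈ R, ∀ g, f₂ (r * g * r') = f₂ g) →
      (∃ F : Finset Λ, ∀ g, f₁ g ≠ 0 → ∃ lam ∈ Λp, g ∈ X lam ∧ ∃ mu ∈ F, lam ≤ mu) →
      (∃ F : Finset Λ, ∀ g, f₂ g ≠ 0 → ∃ lam ∈ Λp, g ∈ X lam ∧ ∃ mu ∈ F, lam ≤ mu) →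
      (∀ z ∈ Γp, (Function.support
          (fun c : Γ ⧸ R => f₁ (Quotient.out c) * f₂ ((Quotient.out c)⁻¹ * z))).Finite) ∧
      (∀ r ∈ R, ∀ r' ∈ R, ∀ g, conv R f₁ f₂ (r * g * r') = conv R f₁ f₂ g) ∧
      (∀ F₁ F₂ : Finset Λ,
        (∀ g, f₁ g ≠ 0 → ∃ lam ∈ Λp, g ∈ X lam ∧ ∃ mu ∈ F₁, lam ≤ mu) →
        (∀ g, f₂ g ≠ 0 → ∃ lam ∈ Λp, g ∈ X lam ∧ ∃ mu ∈ F₂, lam ≤ mu) →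
        ∀ g, conv R f₁ f₂ g ≠ 0 →
          ∃ nu ∈ Λp, g ∈ X nu ∧ ∃ mu₁ ∈ F₁, ∃ mu₂ ∈ F₂, nu ≤ mu₁ + mu₂) := by
  intro f₁ f₂ _ _ hbi₁ hbi₂ ⟨F₁, hF₁⟩ ⟨F₂, hF₂⟩
  have : IsOrderedAddMonoid Λ := { add_le_add_left := fun a b h c => hcov a b c h }
  let : LocallyFiniteOrder Λ := .ofFiniteIcc hint
  have hX : ∀ lam ∈ Λp, ∃ a, X lam = DoubleCoset.doubleCoset a (R : Set Γ) (R : Set Γ) :=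
    fun lam hlam => (hXdc lam hlam).imp fun _ => And.right
  refine ⟨fun z hz => ?_, conv_isBiInvariant hbi₁ hbi₂,
    fun F₁ F₂ hF₁ hF₂ g hg => exists_le_add_of_conv_ne_zero SH2 hF₁ hF₂ hg⟩
  obtain ⟨ν, hν, hXν⟩ := hXsurj z hz
  exact finite_support_summand hX hXinj SH2 hF₁ hF₂ hν
    (hXν ▸ DoubleCoset.mem_doubleCoset_self R R z) fun lam hlam mu hmu => SH1 lam hlam mu hmu z hz

open Stmt4 in
/-- Semi-infinite convolution: under (SH1), (SH2) and finiteness of order-intervals in the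
ordered abelian group `Λ` indexing the `(R,R)`-double cosets of `Γ₊`, the convolution of two
`R`-bi-invariant, semi-infinitely supported functions is well defined (finitely many cosets
contribute at each point of `Γ₊`), is `R`-bi-invariant, and its support is controlled by
the sums of the bounds for the supports of the two factors. -/
theorem stmt4 {Γ : Type*} [Group Γ] {Λ : Type*} [AddCommGroup Λ] [PartialOrder Λ]
    (hcov : ∀ a b c : Λ, a ≤ b → a + c ≤ b + c)
    (hint : ∀ a b : Λ, (Set.Icc a b).Finite)
    (Γp : Subsemigroup Γ) (R : Subgroup Γ) (hR : (R : Set Γ) ⊆ (Γp : Set Γ))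
    (Λp : Set Λ) (X : Λ → Set Γ)
    (hXdc : ∀ lam ∈ Λp, ∃ a ∈ Γp, X lam = DoubleCoset.doubleCoset a (R : Set Γ) (R : Set Γ))
    (hXinj : ∀ lam ∈ Λp, ∀ mu ∈ Λp, X lam = X mu → lam = mu)
    (hXsurj : ∀ a ∈ Γp, ∃ lam ∈ Λp, X lam = DoubleCoset.doubleCoset a (R : Set Γ) (R : Set Γ))
    (SH1 : ∀ lam ∈ Λp, ∀ mu ∈ Λp, ∀ z ∈ Γp,
      (leftOrbits R (invMul (X lam) z ∩ X mu)).Finite)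
    (SH2 : ∀ lam ∈ Λp, ∀ mu ∈ Λp,
      X lam * X mu ⊆ ⋃ nu ∈ {nu | nu ∈ Λp ∧ nu ≤ lam + mu}, X nu) :
    ∀ f₁ f₂ : Γ → ℂ,
      (∀ g, f₁ g ≠ 0 → g ∈ Γp) → (∀ g, f₂ g ≠ 0 → g ∈ Γp) →
      (∀ r ∈ R, ∀ r' ∈ R, ∀ g, f₁ (r * g * r') = f₁ g) →
      (∀ r ∈ R, ∀ r' ∈ R, ∀ g, f₂ (r * g * r') = f₂ g) →
      (∃ F : Finset Λ, ∀ g, f₁ g ≠ 0 → ∃ lam ∈ Λp, g ∈ X lam ∧ ∃ mu ∈ F, lam ≤ mu) →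
      (∃ F : Finset Λ, ∀ g, f₂ g ≠ 0 → ∃ lam ∈ Λp, g ∈ X lam ∧ ∃ mu ∈ F, lam ≤ mu) →
      (∀ z ∈ Γp, (Function.support
          (fun c : Γ ⧸ R => f₁ (Quotient.out c) * f₂ ((Quotient.out c)⁻¹ * z))).Finite) ∧
      (∀ r ∈ R, ∀ r' ∈ R, ∀ g, conv R f₁ f₂ (r * g * r') = conv R f₁ f₂ g) ∧
      (∀ F₁ F₂ : Finset Λ,
        (∀ g, f₁ g ≠ 0 → ∃ lam ∈ Λp, g ∈ X lam ∧ ∃ mu ∈ F₁, lam ≤ mu) →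
        (∀ g, f₂ g ≠ 0 → ∃ lam ∈ Λp, g ∈ X lam ∧ ∃ mu ∈ F₂, lam ≤ mu) →
        ∀ g, conv R f₁ f₂ g ≠ 0 →
          ∃ nu ∈ Λp, g ∈ X nu ∧ ∃ mu₁ ∈ F₁, ∃ mu₂ ∈ F₂, nu ≤ mu₁ + mu₂) :=
  stmt4_general hcov hint Γp R Λp X hXdc hXinj hXsurj SH1 SH2
end

section
/- Let Γ be a group, Γ₊ ⊆ Γ a sub-semigroup, and R, L subgroups of Γ with R ⊆ Γ₊ and L ⊆ Γ₊. Let Ω be an abelian group with a translation-invariant partial order all of whose intervals are finite, let Λ₊ ⊆ Ω be a subset, let λ ↦ X^λ be a bijection from Λ₊ onto the set of (R,R)-double cosets contained in Γ₊, and let ν ↦ Y^ν be a bijection from Ω onto the set of (L,R)-double cosets of Γ. Assume (SH2): for all λ, μ ∈ Λ₊, X^λ·X^μ is contained in the union of the X^ν over ν ∈ Λ₊ with ν ≤ λ + μ; (SM1): for all λ ∈ Ω, μ ∈ Λ₊ and z ∈ Γ the set R\((Y^λ)⁻¹z ∩ X^μ) is finite; and (SM2): for all λ ∈ Ω and μ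 ∈ Λ₊, Y^λ·X^μ is contained in the union of the Y^ν over ν ∈ Ω with ν ≤ λ + μ. Then (SH1) holds: for all λ, μ ∈ Λ₊ and z ∈ Γ₊ the set R\((X^λ)⁻¹z ∩ X^μ) is finite. -/
open scoped Pointwise

namespace Stmt6

variable {Γ : Type*} [Group Γ]

/-- The orbit set `R\S` of left multiplication by the subgroup `R` on a subset `S ⊆ Γ`. -/
def leftOrbits (R : Subgroup Γ) (S : Set Γ) : Set (Set Γ) :=
  {C | ∃ g ∈ S, C = (R : Set Γ) * {g}}

/-- `A⁻¹x = {a⁻¹ · x : a ∈ A}`. -/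
def invMul (A : Set Γ) (x : Γ) : Set Γ := (fun a => a⁻¹ * x) '' A

end Stmt6

/-!
If `x⁻¹z ∈ (X^λ)⁻¹z ∩ X^μ`, let `Y^ν` be the `(L,R)`-double coset of `x`. Since `1 ∈ Y^{ν₀}`,
(SM2) applied to `x ∈ Y^{ν₀} X^λ` gives `ν ≤ ν₀ + λ`, and applied to `z = x · x⁻¹z ∈ Y^ν X^μ`
gives `κ ≤ ν + μ`, where `Y^κ` is the double coset of `z`. Hence `(X^λ)⁻¹z ∩ X^μ` lies in the
union of the sets `(Y^ν)⁻¹z ∩ X^μ` over the finite interval `[κ - μ, ν₀ + λ]`, each of which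
has finitely many `R`-orbits by (SM1).
-/

namespace Stmt6

variable {Γ : Type*} [Group Γ]

theorem leftOrbits_mono (R : Subgroup Γ) {S T : Set Γ} (h : S ⊆ T) :
    leftOrbits R S ⊆ leftOrbits R T := by
  rintro C ⟨g, hg, rfl⟩
  exact ⟨g, h hg, rfl⟩

theorem leftOrbits_biUnion {ι : Type*} (R : Subgroup Γ) (s : Set ι) (S : ι → Set Γ) :
    leftOrbits R (⋃ i ∈ s, S i) = ⋃ i ∈ s, leftOrbits R (S i) := by
  ext C
  simp only [leftOrbits, Set.mem_iUnion, Set.mem_ofPred_eq]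
  constructor
  · rintro ⟨g, ⟨i, hi, hg⟩, rfl⟩
    exact ⟨i, hi, g, hg, rfl⟩
  · rintro ⟨i, hi, g, hg, rfl⟩
    exact ⟨g, ⟨i, hi, hg⟩, rfl⟩

theorem leftOrbits_finite_of_subset_biUnion {ι : Type*} {R : Subgroup Γ} {s : Set ι}
    {S : ι → Set Γ} {T : Set Γ} (hs : s.Finite) (hS : ∀ i ∈ s, (leftOrbits R (S i)).Finite)
    (hT : T ⊆ ⋃ i ∈ s, S i) : (leftOrbits R T).Finite :=
  ((leftOrbits_biUnion R s S) ▸ hs.biUnion hS).subset (leftOrbits_mono R hT)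

theorem eq_of_mem_of_mem_doubleCoset {ι : Type*} {H K : Subgroup Γ} {Y : ι → Set Γ}
    (hY : ∀ i, ∃ a, Y i = DoubleCoset.doubleCoset a (H : Set Γ) (K : Set Γ))
    (hinj : Function.Injective Y) {x : Γ} {i j : ι} (hi : x ∈ Y i) (hj : x ∈ Y j) :
    i = j := by
  obtain ⟨a, ha⟩ := hY i
  obtain ⟨b, hb⟩ := hY j
  apply hinj
  rw [ha, hb, ← DoubleCoset.doubleCoset_eq_of_mem (ha ▸ hi),
    DoubleCoset.doubleCoset_eq_of_mem (hb ▸ hj)]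

variable {Ω : Type*} [AddCommGroup Ω] [PartialOrder Ω] [IsOrderedAddMonoid Ω]

theorem invMul_inter_subset_biUnion_Icc {Λ : Set Ω} {X Y : Ω → Set Γ}
    (hYX : ∀ a, ∀ b ∈ Λ, Y a * X b ⊆ ⋃ c ∈ {c : Ω | c ≤ a + b}, Y c)
    {lam mu nu₀ kappa : Ω} (hlam : lam ∈ Λ) (hmu : mu ∈ Λ) (hone : 1 ∈ Y nu₀) {z : Γ}
    (hz : ∀ c, z ∈ Y c → c = kappa) :
    invMul (X lam) z ∩ X mu ⊆
      ⋃ nu ∈ Set.Icc (kappa - mu) (nu₀ + lam), invMul (Y nu) z ∩ X mu := by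
  rintro _ ⟨⟨x, hx, rfl⟩, hxz⟩
  have hx' : x ∈ ⋃ c ∈ {c : Ω | c ≤ nu₀ + lam}, Y c :=
    hYX nu₀ lam hlam ⟨1, hone, x, hx, one_mul x⟩
  obtain ⟨nu, hle, hxY⟩ := Set.mem_iUnion₂.mp hx'
  have hz' : z ∈ ⋃ c ∈ {c : Ω | c ≤ nu + mu}, Y c :=
    hYX nu mu hmu ⟨x, hxY, x⁻¹ * z, hxz, mul_inv_cancel_left x z⟩
  obtain ⟨c, hc, hzY⟩ := Set.mem_iUnion₂.mp hz'
  have hge : kappa - mu ≤ nu := sub_le_iff_le_add.mpr (hz c hzY ▸ hc)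
  exact Set.mem_biUnion ⟨hge, hle⟩ ⟨⟨x, hxY, rfl⟩, hxz⟩

end Stmt6

open Stmt6 in
theorem stmt6_general {Γ : Type*} [Group Γ] {Ω : Type*} [AddCommGroup Ω] [PartialOrder Ω]
    (hcov : ∀ a b c : Ω, a ≤ b → a + c ≤ b + c)
    (hint : ∀ a b : Ω, (Set.Icc a b).Finite)
    (Γp : Subsemigroup Γ) (R L : Subgroup Γ)
    (Λp : Set Ω) (X : Ω → Set Γ) (Y : Ω → Set Γ)
    (hYdc : ∀ nu : Ω, ∃ a : Γ, Y nu = DoubleCoset.doubleCoset a (L : Set Γ) (R : Set Γ))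
    (hYinj : ∀ nu mu : Ω, Y nu = Y mu → nu = mu)
    (hYsurj : ∀ a : Γ, ∃ nu : Ω, Y nu = DoubleCoset.doubleCoset a (L : Set Γ) (R : Set Γ))
    (SM1 : ∀ lam : Ω, ∀ mu ∈ Λp, ∀ z : Γ,
      (leftOrbits R (invMul (Y lam) z ∩ X mu)).Finite)
    (SM2 : ∀ lam : Ω, ∀ mu ∈ Λp,
      Y lam * X mu ⊆ ⋃ nu ∈ {nu : Ω | nu ≤ lam + mu}, Y nu) :
    ∀ lam ∈ Λp, ∀ mu ∈ Λp, ∀ z ∈ Γp,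
      (leftOrbits R (invMul (X lam) z ∩ X mu)).Finite := by
  intro lam hlam mu hmu z _
  have : IsOrderedAddMonoid Ω := { add_le_add_left := fun a b h c => hcov a b c h }
  obtain ⟨nu₀, hnu₀⟩ := hYsurj 1
  obtain ⟨kappa, hkappa⟩ := hYsurj z
  have hone : 1 ∈ Y nu₀ := hnu₀ ▸ DoubleCoset.mem_doubleCoset_self L R 1
  have hz : ∀ c, z ∈ Y c → c = kappa := fun c hc =>
    eq_of_mem_of_mem_doubleCoset hYdc hYinj hc (hkappa ▸ DoubleCoset.mem_doubleCoset_self L R z)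
  exact leftOrbits_finite_of_subset_biUnion (hint _ _) (fun nu _ => SM1 nu mu hmu z)
    (invMul_inter_subset_biUnion_Icc SM2 hlam hmu hone hz)

open Stmt6 in
/-- Simplified criterion for a semi-infinite Hecke module datum: the fiber-finiteness
condition (SH1) follows from (SH2), (SM1) and (SM2). -/
theorem stmt6 {Γ : Type*} [Group Γ] {Ω : Type*} [AddCommGroup Ω] [PartialOrder Ω]
    (hcov : ∀ a b c : Ω, a ≤ b → a + c ≤ b + c)
    (hint : ∀ a b : Ω, (Set.Icc a b).Finite)
    (Γp : Subsemigroup Γ) (R L : Subgroup Γ)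
    (hR : (R : Set Γ) ⊆ (Γp : Set Γ)) (hL : (L : Set Γ) ⊆ (Γp : Set Γ))
    (Λp : Set Ω) (X : Ω → Set Γ) (Y : Ω → Set Γ)
    (hXdc : ∀ lam ∈ Λp, ∃ a ∈ Γp, X lam = DoubleCoset.doubleCoset a (R : Set Γ) (R : Set Γ))
    (hXinj : ∀ lam ∈ Λp, ∀ mu ∈ Λp, X lam = X mu → lam = mu)
    (hXsurj : ∀ a ∈ Γp, ∃ lam ∈ Λp, X lam = DoubleCoset.doubleCoset a (R : Set Γ) (R : Set Γ))
    (hYdc : ∀ nu : Ω, ∃ a : Γ, Y nu = DoubleCoset.doubleCoset a (L : Set Γ) (R : Set Γ))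
    (hYinj : ∀ nu mu : Ω, Y nu = Y mu → nu = mu)
    (hYsurj : ∀ a : Γ, ∃ nu : Ω, Y nu = DoubleCoset.doubleCoset a (L : Set Γ) (R : Set Γ))
    (SH2 : ∀ lam ∈ Λp, ∀ mu ∈ Λp,
      X lam * X mu ⊆ ⋃ nu ∈ {nu | nu ∈ Λp ∧ nu ≤ lam + mu}, X nu)
    (SM1 : ∀ lam : Ω, ∀ mu ∈ Λp, ∀ z : Γ,
      (leftOrbits R (invMul (Y lam) z ∩ X mu)).Finite)
    (SM2 : ∀ lam : Ω, ∀ mu ∈ Λp,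
      Y lam * X mu ⊆ ⋃ nu ∈ {nu : Ω | nu ≤ lam + mu}, Y nu) :
    ∀ lam ∈ Λp, ∀ mu ∈ Λp, ∀ z ∈ Γp,
      (leftOrbits R (invMul (X lam) z ∩ X mu)).Finite :=
  stmt6_general hcov hint Γp R L Λp X Y hYdc hYinj hYsurj SM1 SM2
end

section
/- Let R be a set with a fixed-point-free involution a ↦ −a, and let R₊ ⊆ R satisfy R = R₊ ∪ (−R₊) with R₊ ∩ (−R₊) = ∅. Let w: R → R be a bijection with w(−a) = −w(a) for all a, and let p: R → ℤ satisfy p(−a) = −p(a). Call a pair (b, k) ∈ R × ℤ positive if k > 0, or k = 0 and b ∈ R₊, and negative otherwise, and define x·(a, k) := (w(a), p(a) + k). Assume (i) the set {a ∈ R₊ : w(a) ∈ −R₊} is finite, and (ii) either p(a) = 0 for all a ∈ R, or for every integer n the set {a ∈ R₊ : p(a) < n} is finite. Then the sets {(a, k) : a ∈ R₊, k ≥ 0, x·(a, k) is negative} and {(a, k) : a ∈ −R₊, k ≤ 0, x·(a, k) is positive} are finite. -/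
/-- Finiteness of the "half-inversion sets" of an element of the affine Weyl semigroup
acting on the affinized roots `R × ℤ`: a pair `(b, k)` is positive if `k > 0`, or `k = 0`
and `b ∈ R₊`, and negative otherwise; the element acts by `x·(a, k) = (w(a), p(a) + k)`.
Under hypotheses (i) (finiteness of the inversion set of `w`) and (ii) (either `p ≡ 0`, or
each sublevel set `{a ∈ R₊ : p(a) < n}` is finite), the sets of pairs `(a, k)` with
`a ∈ R₊, k ≥ 0` sent to negative pairs, and with `a ∈ −R₊, k ≤ 0` sent to positive pairs,
are both finite. -/
theorem stmt11 {A : Type*} (neg : A → A) (hinv : ∀ a, neg (neg a) = a)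
    (hfpf : ∀ a, neg a ≠ a)
    (Rp : Set A) (hcover : ∀ a, a ∈ Rp ∨ a ∈ neg '' Rp)
    (hdisj : Rp ∩ (neg '' Rp) = ∅)
    (w : A → A) (hw : Function.Bijective w) (hwneg : ∀ a, w (neg a) = neg (w a))
    (p : A → ℤ) (hp : ∀ a, p (neg a) = -p a)
    (hi : {a | a ∈ Rp ∧ w a ∈ neg '' Rp}.Finite)
    (hii : (∀ a, p a = 0) ∨ ∀ n : ℤ, {a | a ∈ Rp ∧ p a < n}.Finite) :
    {q : A × ℤ | q.1 ∈ Rp ∧ 0 ≤ q.2 ∧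
      ¬(0 < p q.1 + q.2 ∨ (p q.1 + q.2 = 0 ∧ w q.1 ∈ Rp))}.Finite ∧
    {q : A × ℤ | q.1 ∈ neg '' Rp ∧ q.2 ≤ 0 ∧
      (0 < p q.1 + q.2 ∨ (p q.1 + q.2 = 0 ∧ w q.1 ∈ Rp))}.Finite := by
  rcases hii with h0 | hsub
  · constructor
    · apply Set.Finite.subset (hi.image (fun a => ((a, 0) : A × ℤ)))
      rintro ⟨a, k⟩ ⟨ha, hk, hneg⟩
      push_neg at hneg
      obtain ⟨h1, h2⟩ := hneg
      rw [h0 a, zero_add] at h1 h2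
      have hk0 : k = 0 := le_antisymm (not_lt.mp (by simpa using h1)) hk
      have hwa : w a ∉ Rp := h2 hk0
      have : w a ∈ neg '' Rp := (hcover (w a)).resolve_left hwa
      exact ⟨a, ⟨ha, this⟩, by simp [hk0]⟩
    · apply Set.Finite.subset (hi.image (fun a => ((neg a, 0) : A × ℤ)))
      rintro ⟨a, k⟩ ⟨⟨b, hb, rfl⟩, hk, hpos⟩
      rw [h0 (neg b), zero_add] at hpos
      rcases hpos with h1 | ⟨h1, h2⟩
      · exact absurd (lt_of_lt_of_le h1 hk) (lt_irrefl 0)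
      · refine ⟨b, ⟨hb, ?_⟩, by simp [h1.symm]⟩
        rw [hwneg b] at h2
        exact ⟨neg (w b), h2, hinv (w b)⟩
  · have hF := hsub 1
    constructor
    · apply Set.Finite.subset
        (Set.Finite.biUnion hF (fun a _ =>
          (Set.finite_singleton a).prod (Set.finite_Icc (0 : ℤ) (-p a))))
      rintro ⟨a, k⟩ ⟨ha, hk, hneg⟩
      push_neg at hneg
      have h1 : p a + k ≤ 0 := hneg.1
      refine Set.mem_biUnion (s := {a | a ∈ Rp ∧ p a < 1}) ⟨ha, by omega⟩ ?_
      exact ⟨rfl, by simp; omega⟩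
    · apply Set.Finite.subset
        (Set.Finite.biUnion hF (fun b _ =>
          (Set.finite_singleton (neg b)).prod (Set.finite_Icc (p b) (0 : ℤ))))
      rintro ⟨a, k⟩ ⟨⟨b, hb, rfl⟩, hk, hpos⟩
      dsimp only at hpos hk
      rw [hp b] at hpos
      have h1 : 0 ≤ -p b + k := by rcases hpos with h | ⟨h, _⟩ <;> omega
      refine Set.mem_biUnion (s := {a | a ∈ Rp ∧ p a < 1}) ⟨hb, by omega⟩ ?_
      exact ⟨rfl, by simp; omega⟩
end
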